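/- Under the hypotheses of the previous statement, assume additionally B₁ₖ ≠ 0 for all k = 1,…,n and that the λₖ are distinct. Then the linearized system is exactly controllable in one time unit within the tangent spaces: for any y₀ ∈ T_{e₁}S = {x ∈ ℂⁿ : Re⟨x, e₁⟩ = 0} and any y₁′ ∈ T_{e₁e^{−iλ₁}}S, there exists a real-valued w ∈ Eₙ (span of real trigonometric polynomials with frequencies μₖ = λ_{k+1} − λ₁, normalized so that w is real) with y(1) = y₁′. -/

import Mathlib

/-!
In the eigenbasis `e` of `Λ` the linearized equation decouples into the scalar equations
`y_k' = -i (λ_k y_k + w(t) e^{-iλ₁t} B₁ₖ)`, solved by Duhamel's formula, and `y(1) = y₁'`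
becomes the moment problem `∫₀¹ e^{iμ_k s} w(s) ds = c_k`. For real `w` the zeroth moment is
real, and `c₁` is real by the tangency conditions and `B₁₁ ∈ ℝ`. On the coefficients of
`w ∈ Eₙ` the moment map is ℝ-linear, and injective up to the invisible `Im d₁`: vanishing
moments give `∫₀¹ w² = 0`, hence `w = 0`, and exponentials with distinct frequencies are
linearly independent (their derivatives at a point are power sums in the frequencies, which a
polynomial vanishing at all frequencies but one separates). In finite dimension injectivity
gives surjectivity.
-/

open Complex MeasureTheory intervalIntegral ComplexConjugate Topology

theorem eq_zero_of_integral_sq_eq_zero {f : ℝ → ℝ} {a b : ℝ} (hab : a < b)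
    (hf : ContinuousOn f (Set.Icc a b)) (h : ∫ t in a..b, f t ^ 2 = 0) :
    ∀ t ∈ Set.Icc a b, f t = 0 := by
  intro t ht
  by_contra hne
  exact (integral_pos hab (hf.pow 2) (fun _ _ => sq_nonneg _)
    ⟨t, ht, pow_two_pos_of_ne_zero hne⟩).ne' h

open Polynomial Classical in
theorem sum_filter_eq_zero_of_forall_sum_mul_pow_eq_zero {ι K : Type*} [Fintype ι] [Field K]
    {z y : ι → K} (h : ∀ m : ℕ, ∑ i, y i * z i ^ m = 0) (ζ : K) :
    ∑ i with z i = ζ, y i = 0 := by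
  have h_poly : ∀ p : K[X], ∑ i, y i * p.eval (z i) = 0 := fun p => by
    simp_rw [eval_eq_sum_range, Finset.mul_sum]
    rw [Finset.sum_comm]
    refine Finset.sum_eq_zero fun m _ => ?_
    simp_rw [mul_left_comm (y _), ← Finset.mul_sum, h, mul_zero]
  set p : K[X] := ∏ ζ' ∈ (Finset.univ.image z).erase ζ, (X - C ζ')
  have hp : ∀ i, p.eval (z i) = if z i = ζ then p.eval ζ else 0 := fun i => by
    split_ifs with hi
    · rw [hi]
    · rw [eval_prod]
      exact Finset.prod_eq_zero (i := z i) (by simp [hi]) (by simp)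
  have hpζ : p.eval ζ ≠ 0 := by
    simp [p, eval_prod, Finset.prod_eq_zero_iff, sub_eq_zero]
  have := h_poly p
  simp_rw [hp, mul_ite, mul_zero, ← Finset.sum_filter, ← Finset.sum_mul] at this
  exact (mul_eq_zero.1 this).resolve_right hpζ

section

variable {ι : Type*} [Fintype ι]

theorem hasDerivAt_sum_mul_cexp (x z : ι → ℂ) (t : ℝ) :
    HasDerivAt (fun t : ℝ => ∑ i, x i * cexp (z i * t))
      (∑ i, x i * z i * cexp (z i * t)) t := by
  refine HasDerivAt.fun_sum fun i _ => ?_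
  have := ((hasDerivAt_id (t : ℂ)).const_mul (z i)).cexp.comp_ofReal.const_mul (x i)
  simpa [mul_comm, mul_left_comm, mul_assoc] using this

theorem iteratedDeriv_sum_mul_cexp (x z : ι → ℂ) (m : ℕ) :
    iteratedDeriv m (fun t : ℝ => ∑ i, x i * cexp (z i * t)) =
      fun t : ℝ => ∑ i, x i * z i ^ m * cexp (z i * t) := by
  induction m generalizing x with
  | zero => simp
  | succ m ih =>
    have hderiv : deriv (fun t : ℝ => ∑ i, x i * cexp (z i * t)) =
        fun t : ℝ => ∑ i, (x i * z i) * cexp (z i * t) :=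
      funext fun t => (hasDerivAt_sum_mul_cexp x z t).deriv
    rw [iteratedDeriv_succ', hderiv, ih]
    exact funext fun t => Finset.sum_congr rfl fun i _ => by ring

open Classical in
theorem sum_filter_eq_zero_of_sum_mul_cexp_eventuallyEq_zero {x z : ι → ℂ} {t₀ : ℝ}
    (h : (fun t : ℝ => ∑ i, x i * cexp (z i * t)) =ᶠ[𝓝 t₀] 0) (ζ : ℂ) :
    ∑ i with z i = ζ, x i = 0 := by
  have h_moments : ∀ m : ℕ, ∑ i, x i * cexp (z i * t₀) * z i ^ m = 0 := fun m => by
    have := h.iteratedDeriv_eq m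
    rw [iteratedDeriv_sum_mul_cexp, iteratedDeriv_const_zero] at this
    simpa [mul_right_comm] using this
  have := sum_filter_eq_zero_of_forall_sum_mul_pow_eq_zero h_moments ζ
  rw [Finset.sum_congr rfl fun i hi => by rw [(Finset.mem_filter.1 hi).2], ← Finset.sum_mul]
    at this
  exact (mul_eq_zero.1 this).resolve_right (Complex.exp_ne_zero _)

noncomputable def trigPoly (μ : ι → ℝ) (d : ι → ℂ) (t : ℝ) : ℂ :=
  ∑ k, (d k * cexp (I * μ k * t) + conj (d k) * cexp (-I * μ k * t))

variable {μ : ι → ℝ} {d : ι → ℂ}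

@[fun_prop]
theorem continuous_trigPoly (μ : ι → ℝ) (d : ι → ℂ) : Continuous (trigPoly μ d) := by
  unfold trigPoly
  fun_prop

theorem conj_trigPoly (t : ℝ) : conj (trigPoly μ d t) = trigPoly μ d t := by
  simp only [trigPoly, map_sum, map_add, map_mul, conj_conj, ← Complex.exp_conj, map_neg,
    conj_I, conj_ofReal, neg_neg]
  exact Finset.sum_congr rfl fun k _ => add_comm _ _

theorem trigPoly_im (t : ℝ) : (trigPoly μ d t).im = 0 :=
  conj_eq_iff_im.1 (conj_trigPoly t)

theorem ofReal_re_trigPoly (t : ℝ) : ((trigPoly μ d t).re : ℂ) = trigPoly μ d t :=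
  conj_eq_iff_re.1 (conj_trigPoly t)

theorem trigPoly_add (d d' : ι → ℂ) (t : ℝ) :
    trigPoly μ (d + d') t = trigPoly μ d t + trigPoly μ d' t := by
  simp only [trigPoly, ← Finset.sum_add_distrib, Pi.add_apply, map_add]
  exact Finset.sum_congr rfl fun k _ => by ring

theorem trigPoly_smul (r : ℝ) (d : ι → ℂ) (t : ℝ) :
    trigPoly μ (r • d) t = r * trigPoly μ d t := by
  simp only [trigPoly, Finset.mul_sum, Pi.smul_apply, real_smul, map_mul, conj_ofReal]
  exact Finset.sum_congr rfl fun k _ => by ring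

theorem trigPoly_eq_sum_cexp (d : ι → ℂ) (t : ℝ) :
    trigPoly μ d t = ∑ i : ι ⊕ ι, Sum.elim d (conj d) i *
      cexp (Sum.elim (fun k => I * μ k) (fun k => -I * μ k) i * t) := by
  simp [trigPoly, Fintype.sum_sum_type, Finset.sum_add_distrib]

theorem trigPoly_coeff_of_eventuallyEq_zero (hμ : Function.Injective μ) (hμ_nonneg : 0 ≤ μ)
    {t₀ : ℝ} (h : trigPoly μ d =ᶠ[𝓝 t₀] 0) (k : ι) : (d k).re = 0 ∧ (μ k ≠ 0 → d k = 0) := by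
  classical
  have hfreq : ∀ j, (I * μ j = I * μ k ↔ j = k) := fun j => by
    simp [I_ne_zero, hμ.eq_iff]
  have hfreq' : ∀ j, (-(I * μ j) = I * μ k ↔ j = k ∧ μ k = 0) := fun j => by
    rw [neg_eq_iff_add_eq_zero, ← mul_add, mul_eq_zero, ← ofReal_add, ofReal_eq_zero]
    simp only [I_ne_zero, false_or]
    have hj₀ : 0 ≤ μ j := hμ_nonneg j
    have hk₀ : 0 ≤ μ k := hμ_nonneg k
    constructor
    · intro hsum
      have hj : μ j = μ k := by linarith
      exact ⟨hμ hj, by linarith⟩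
    · rintro ⟨rfl, hk⟩
      linarith
  have h' : (fun t : ℝ => ∑ i : ι ⊕ ι, Sum.elim d (conj d) i *
      cexp (Sum.elim (fun k => I * μ k) (fun k => -I * μ k) i * t)) =ᶠ[𝓝 t₀] 0 := by
    simpa only [← trigPoly_eq_sum_cexp] using h
  have := sum_filter_eq_zero_of_sum_mul_cexp_eventuallyEq_zero h' (I * μ k)
  simp only [Finset.sum_filter, Fintype.sum_sum_type, Sum.elim_inl, Sum.elim_inr, hfreq, hfreq',
    neg_mul, Finset.sum_ite_eq', Finset.mem_univ, if_true, ite_and] at this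
  by_cases hk : μ k = 0
  · simp only [hk, if_true, Pi.conj_apply] at this
    refine ⟨?_, fun h => absurd hk h⟩
    simpa [add_conj] using this
  · simp only [hk, if_false, add_zero] at this
    simp [this, hk]

noncomputable def trigMoment (μ : ι → ℝ) : (ι → ℂ) →ₗ[ℝ] ι → ℂ where
  toFun d k := ∫ s in (0:ℝ)..1, cexp (I * μ k * s) * trigPoly μ d s
  map_add' d d' := funext fun k => by
    simp only [Pi.add_apply, trigPoly_add, mul_add]
    exact integral_add ((by fun_prop : Continuous _).intervalIntegrable _ _)
      ((by fun_prop : Continuous _).intervalIntegrable _ _)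
  map_smul' r d := funext fun k => by
    simp only [trigPoly_smul, mul_left_comm _ (r : ℂ), intervalIntegral.integral_const_mul,
      Pi.smul_apply, real_smul, RingHom.id_apply]

theorem trigMoment_apply (d : ι → ℂ) (k : ι) :
    trigMoment μ d k = ∫ s in (0:ℝ)..1, cexp (I * μ k * s) * trigPoly μ d s := rfl

theorem im_trigMoment_eq_zero {k : ι} (hk : μ k = 0) : (trigMoment μ d k).im = 0 := by
  rw [← conj_eq_iff_im, trigMoment_apply, ← intervalIntegral_conj]
  simp [hk, conj_trigPoly]

theorem trigPoly_eq_zero_of_trigMoment_eq_zero (h : trigMoment μ d = 0) :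
    ∀ t ∈ Set.Icc (0:ℝ) 1, trigPoly μ d t = 0 := by
  have hM : ∀ k, ∫ s in (0:ℝ)..1, cexp (I * μ k * s) * trigPoly μ d s = 0 :=
    fun k => congrFun h k
  have hN : ∀ k, ∫ s in (0:ℝ)..1, cexp (-I * μ k * s) * trigPoly μ d s = 0 := fun k => by
    simpa [← intervalIntegral_conj, conj_trigPoly, ← Complex.exp_conj] using
      congrArg conj (hM k)
  have hsq : ∫ s in (0:ℝ)..1, (trigPoly μ d s).re ^ 2 = 0 := by
    suffices ∫ s in (0:ℝ)..1, trigPoly μ d s * trigPoly μ d s = 0 by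
      rw [← ofReal_eq_zero, ← integral_ofReal]
      simpa [ofReal_re_trigPoly, sq] using this
    have hexpand : ∀ s, trigPoly μ d s * trigPoly μ d s = ∑ k, (d k *
        (cexp (I * μ k * s) * trigPoly μ d s) +
          conj (d k) * (cexp (-I * μ k * s) * trigPoly μ d s)) :=
      fun s => by
        nth_rewrite 1 [trigPoly]
        rw [Finset.sum_mul]
        exact Finset.sum_congr rfl fun k _ => by ring
    simp_rw [hexpand]
    rw [integral_finsetSum fun k _ => (by fun_prop : Continuous _).intervalIntegrable _ _]
    refine Finset.sum_eq_zero fun k _ => ?_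
    rw [integral_add ((by fun_prop : Continuous _).intervalIntegrable _ _)
      ((by fun_prop : Continuous _).intervalIntegrable _ _), intervalIntegral.integral_const_mul,
      intervalIntegral.integral_const_mul, hM, hN, mul_zero, mul_zero, add_zero]
  intro t ht
  rw [← ofReal_re_trigPoly, eq_zero_of_integral_sq_eq_zero one_pos (by fun_prop) hsq t ht,
    ofReal_zero]

open Function in
theorem exists_trigMoment_eq (hμ : Injective μ) (hμ_nonneg : 0 ≤ μ) {i₀ : ι} (hi₀ : μ i₀ = 0)
    {c : ι → ℂ} (hc : (c i₀).im = 0) : ∃ d, trigMoment μ d = c := by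
  classical
  -- `Im (d i₀)` does not enter `trigPoly μ d` and the `i₀`-th moment is real, so recording it in
  -- the imaginary part of the `i₀`-th coordinate turns the moment map into a bijection
  let T : (ι → ℂ) →ₗ[ℝ] ι → ℂ := trigMoment μ + LinearMap.single ℝ (fun _ => ℂ) i₀ ∘ₗ
    LinearMap.toSpanSingleton ℝ ℂ I ∘ₗ imLm ∘ₗ LinearMap.proj i₀
  have hT : ∀ d, T d = trigMoment μ d + Pi.single i₀ ((d i₀).im • I) := fun d => rfl
  have him : ∀ d, (d i₀).im = (T d i₀).im := fun d => by
    simp [hT, im_trigMoment_eq_zero hi₀]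
  have hT_inj : Injective T := by
    rw [← LinearMap.ker_eq_bot, LinearMap.ker_eq_bot']
    intro d hd
    have hd₀ : (d i₀).im = 0 := by rw [him, hd]; rfl
    have hM : trigMoment μ d = 0 := by simpa [hT, hd₀] using hd
    have hw : trigPoly μ d =ᶠ[𝓝 (1 / 2)] 0 := by
      filter_upwards [Ioo_mem_nhds (by norm_num : (0:ℝ) < 1 / 2) (by norm_num : (1:ℝ) / 2 < 1)]
        with t ht
      exact trigPoly_eq_zero_of_trigMoment_eq_zero hM t (Set.Ioo_subset_Icc_self ht)
    funext k
    obtain ⟨hre, hne⟩ := trigPoly_coeff_of_eventuallyEq_zero hμ hμ_nonneg hw k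
    by_cases hk : k = i₀
    · subst hk
      exact Complex.ext hre hd₀
    · exact hne fun h => hk (hμ (h.trans hi₀.symm))
  obtain ⟨d, hd⟩ := LinearMap.injective_iff_surjective.1 hT_inj c
  have hd₀ : (d i₀).im = 0 := by rw [him, hd, hc]
  exact ⟨d, by simpa [hT, hd₀] using hd⟩

end

noncomputable def duhamel (ν a : ℂ) (f : ℝ → ℂ) (t : ℝ) : ℂ :=
  cexp (-I * ν * t) * (a - I * ∫ s in (0:ℝ)..t, cexp (I * ν * s) * f s)

section

variable {ν a : ℂ} {f : ℝ → ℂ}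

theorem duhamel_zero : duhamel ν a f 0 = a := by simp [duhamel]

theorem hasDerivAt_duhamel (hf : Continuous f) (t : ℝ) :
    HasDerivAt (duhamel ν a f) (-I * (ν * duhamel ν a f t + f t)) t := by
  have hF := ((by fun_prop : Continuous fun s : ℝ => cexp (I * ν * s) * f s)
    |>.integral_hasStrictDerivAt 0 t).hasDerivAt
  have hE : HasDerivAt (fun t : ℝ => cexp (-I * ν * t)) (-I * ν * cexp (-I * ν * t)) t := by
    simpa [mul_comm] using ((hasDerivAt_id (t : ℂ)).const_mul (-I * ν)).cexp.comp_ofReal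
  refine (hE.fun_mul ((hF.const_mul I).const_sub a)).congr_deriv ?_
  have hcancel : cexp (-I * ν * t) * cexp (I * ν * t) = 1 := by
    rw [← Complex.exp_add]; ring_nf; exact Complex.exp_zero
  rw [duhamel]
  linear_combination (-I * f t) * hcancel

@[fun_prop]
theorem continuous_duhamel (hf : Continuous f) : Continuous (duhamel ν a f) :=
  continuous_iff_continuousAt.2 fun t => (hasDerivAt_duhamel hf t).continuousAt

theorem duhamel_eq_sub_integral (hf : Continuous f) (t : ℝ) :
    duhamel ν a f t = a - I * ∫ s in (0:ℝ)..t, (ν * duhamel ν a f s + f s) := by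
  have := integral_eq_sub_of_hasDerivAt (fun s _ => hasDerivAt_duhamel (ν := ν) (a := a) hf s)
    ((by fun_prop : Continuous fun s => -I * (ν * duhamel ν a f s + f s)).intervalIntegrable
      0 t)
  rw [intervalIntegral.integral_const_mul, duhamel_zero] at this
  linear_combination -this

theorem duhamel_one_of_integral_eq {g : ℂ}
    (h : I * ∫ s in (0:ℝ)..1, cexp (I * ν * s) * f s = a - cexp (I * ν) * g) :
    duhamel ν a f 1 = g := by
  have hcancel : cexp (-I * ν) * cexp (I * ν) = 1 := by
    rw [← Complex.exp_add]; ring_nf; exact Complex.exp_zero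
  simp only [duhamel, ofReal_one, mul_one, h]
  linear_combination g * hcancel

end

theorem exists_trigPoly_duhamel_one_eq {ι : Type*} [Fintype ι] {lam : ι → ℝ} {i₀ : ι}
    (hlam : Function.Injective lam) (hlam₀ : ∀ k, lam i₀ ≤ lam k) {a g β : ι → ℂ}
    (hβ : ∀ k, β k ≠ 0) (hβ₀ : (β i₀).im = 0) (ha₀ : (a i₀).re = 0)
    (hg₀ : (cexp (I * lam i₀) * g i₀).re = 0) :
    ∃ d, ∀ k, duhamel (lam k) (a k)
      (fun s => trigPoly (fun j => lam j - lam i₀) d s * cexp (-I * lam i₀ * s) * β k) 1 =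
        g k := by
  set μ : ι → ℝ := fun j => lam j - lam i₀
  set c : ι → ℂ := fun k => (a k - cexp (I * lam k) * g k) / (I * β k)
  have hc₀ : (c i₀).im = 0 := by simp [c, div_im, hβ₀, hg₀, ha₀]
  obtain ⟨d, hd⟩ := exists_trigMoment_eq (μ := μ) (fun i j h => hlam (by simpa [μ] using h))
    (fun k => sub_nonneg.2 (hlam₀ k)) (sub_self _) hc₀
  refine ⟨d, fun k => duhamel_one_of_integral_eq ?_⟩
  calc I * ∫ s in (0:ℝ)..1,
          cexp (I * lam k * s) * (trigPoly μ d s * cexp (-I * lam i₀ * s) * β k)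
      = I * β k * trigMoment μ d k := by
        rw [trigMoment_apply, mul_assoc, ← intervalIntegral.integral_const_mul (β k)]
        congr 1
        refine intervalIntegral.integral_congr fun s _ => ?_
        have hexp : cexp (I * lam k * s) * cexp (-I * lam i₀ * s) = cexp (I * μ k * s) := by
          rw [← Complex.exp_add]; push_cast [μ]; ring_nf
        linear_combination (β k * trigPoly μ d s) * hexp
    _ = a k - cexp (I * lam k) * g k := by
        rw [hd, mul_div_cancel₀ _ (mul_ne_zero I_ne_zero (hβ k))]

theorem Orthonormal.sum_inner_smul_eq_self {𝕜 E ι : Type*} [RCLike 𝕜] [NormedAddCommGroup E]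
    [InnerProductSpace 𝕜 E] [FiniteDimensional 𝕜 E] [Fintype ι] {v : ι → E}
    (hv : Orthonormal 𝕜 v) (hcard : Fintype.card ι = Module.finrank 𝕜 E) (x : E) :
    ∑ i, inner 𝕜 (v i) x • v i = x := by
  simpa using (OrthonormalBasis.mk hv
    (hv.linearIndependent.span_eq_top_of_card_eq_finrank' hcard).ge).sum_repr' x

theorem sum_smul_eigenvector_eq_sub_integral {ι E : Type*} [Fintype ι] [NormedAddCommGroup E]
    [NormedSpace ℂ E] [CompleteSpace E] (Λ : E →ₗ[ℂ] E) {e : ι → E} {ν : ι → ℂ}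
    (hev : ∀ k, Λ (e k) = ν k • e k)
    {v : E} {β : ι → ℂ} (hv : ∑ k, β k • e k = v) {u : ℝ → ℂ} (hu : Continuous u)
    {z : ι → ℝ → ℂ} (hz : ∀ k, Continuous (z k))
    (hz_eq : ∀ k t, z k t = z k 0 - I * ∫ s in (0:ℝ)..t, (ν k * z k s + u s * β k)) (t : ℝ) :
    ∑ k, z k t • e k =
      ∑ k, z k 0 • e k - I • ∫ s in (0:ℝ)..t, (Λ (∑ k, z k s • e k) + u s • v) := by
  have hintegrand : ∀ s, Λ (∑ k, z k s • e k) + u s • v =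
      ∑ k, (ν k * z k s + u s * β k) • e k := fun s => by
    simp only [map_sum, map_smul, hev, ← hv, Finset.smul_sum, smul_smul,
      ← Finset.sum_add_distrib, add_smul, mul_comm]
  simp_rw [hintegrand]
  rw [integral_finsetSum fun k _ => (by fun_prop : Continuous _).intervalIntegrable _ _]
  simp_rw [intervalIntegral.integral_smul_const, Finset.smul_sum, smul_smul,
    ← Finset.sum_sub_distrib, ← sub_smul, ← hz_eq]

theorem stmt_15_general {n : ℕ}
    (Λ B : EuclideanSpace ℂ (Fin (n + 1)) →ₗ[ℂ] EuclideanSpace ℂ (Fin (n + 1)))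
    (hB : ∀ x y, inner ℂ (B x) y = (inner ℂ x (B y) : ℂ))
    (e : Fin (n + 1) → EuclideanSpace ℂ (Fin (n + 1))) (he : Orthonormal ℂ e)
    (lam : Fin (n + 1) → ℝ) (hlam : StrictMono lam)
    (hev : ∀ j, Λ (e j) = ((lam j : ℂ)) • e j)
    (hB1k : ∀ k, (inner ℂ (e k) (B (e 0)) : ℂ) ≠ 0)
    (y₀ y₁' : EuclideanSpace ℂ (Fin (n + 1)))
    (hy₀ : ((inner ℂ (e 0) y₀ : ℂ)).re = 0)
    (hy₁' : ((inner ℂ (Complex.exp (-Complex.I * (lam 0 : ℂ)) • e 0) y₁' : ℂ)).re = 0) :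
    ∃ (d : Fin (n + 1) → ℂ) (w : ℝ → ℂ),
      (∀ t : ℝ, w t = ∑ k : Fin (n + 1),
        (d k * Complex.exp (Complex.I * ((lam k : ℂ) - (lam 0 : ℂ)) * (t : ℂ)) +
         (starRingEnd ℂ) (d k) *
           Complex.exp (-Complex.I * ((lam k : ℂ) - (lam 0 : ℂ)) * (t : ℂ)))) ∧
      (∀ t : ℝ, (w t).im = 0) ∧
      ∃ y : ℝ → EuclideanSpace ℂ (Fin (n + 1)),
        y 0 = y₀ ∧
        (∀ t ∈ Set.Icc (0:ℝ) 1,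
          y t = y 0 - Complex.I •
            ∫ s in (0:ℝ)..t,
              (Λ (y s) + (w s * Complex.exp (-Complex.I * (lam 0 : ℂ) * (s : ℂ))) • B (e 0))) ∧
        y 1 = y₁' := by
  have hexpand : ∀ x, ∑ k, inner ℂ (e k) x • e k = x := he.sum_inner_smul_eq_self (by simp)
  have hβ₀ : (inner ℂ (e 0) (B (e 0))).im = 0 :=
    conj_eq_iff_im.1 (by rw [inner_conj_symm, hB])
  have hg₀ : (cexp (I * lam 0) * inner ℂ (e 0) y₁').re = 0 := by
    rw [inner_smul_left, ← Complex.exp_conj] at hy₁'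
    simpa using hy₁'
  obtain ⟨d, hd⟩ := exists_trigPoly_duhamel_one_eq (a := fun k => inner ℂ (e k) y₀)
    (g := fun k => inner ℂ (e k) y₁') hlam.injective (fun k => hlam.monotone (Fin.zero_le k))
    hB1k hβ₀ hy₀ hg₀
  set w := trigPoly (fun j => lam j - lam 0) d
  set z : Fin (n + 1) → ℝ → ℂ := fun k => duhamel (lam k) (inner ℂ (e k) y₀)
    (fun s => w s * cexp (-I * lam 0 * s) * inner ℂ (e k) (B (e 0)))
  have hf : ∀ k, Continuous fun s => w s * cexp (-I * lam 0 * s) * inner ℂ (e k) (B (e 0)) :=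
    fun k => by fun_prop
  refine ⟨d, w, fun t => by simp [w, trigPoly], trigPoly_im, fun t => ∑ k, z k t • e k,
    by simp [z, duhamel_zero, hexpand], fun t _ => ?_, by simp only [z, hd, hexpand]⟩
  exact sum_smul_eigenvector_eq_sub_integral Λ hev (hexpand _) (by fun_prop)
    (fun k => continuous_duhamel (hf k))
    (fun k t => by rw [duhamel_zero]; exact duhamel_eq_sub_integral (hf k) t) t

/-- Exact controllability of the linearization of the Schrödinger equation in
one time unit: under `B₁ₖ ≠ 0` and distinct eigenvalues, for any
`y₀ ∈ T_{e₁}S` and `y₁′ ∈ T_{e₁e^{−iλ₁}}S` there is a real-valued trigonometric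
polynomial `w ∈ Eₙ` (frequencies `±(λₖ − λ₁)`) steering `y₀` to `y₁′`. -/
theorem stmt_15 {n : ℕ}
    (Λ B : EuclideanSpace ℂ (Fin (n + 1)) →ₗ[ℂ] EuclideanSpace ℂ (Fin (n + 1)))
    (hΛ : ∀ x y, inner ℂ (Λ x) y = (inner ℂ x (Λ y) : ℂ))
    (hB : ∀ x y, inner ℂ (B x) y = (inner ℂ x (B y) : ℂ))
    (e : Fin (n + 1) → EuclideanSpace ℂ (Fin (n + 1))) (he : Orthonormal ℂ e)
    (lam : Fin (n + 1) → ℝ) (hlam : StrictMono lam)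
    (hev : ∀ j, Λ (e j) = ((lam j : ℂ)) • e j)
    (hB1k : ∀ k, (inner ℂ (e k) (B (e 0)) : ℂ) ≠ 0)
    (y₀ y₁' : EuclideanSpace ℂ (Fin (n + 1)))
    (hy₀ : ((inner ℂ (e 0) y₀ : ℂ)).re = 0)
    (hy₁' : ((inner ℂ (Complex.exp (-Complex.I * (lam 0 : ℂ)) • e 0) y₁' : ℂ)).re = 0) :
    ∃ (d : Fin (n + 1) → ℂ) (w : ℝ → ℂ),
      (∀ t : ℝ, w t = ∑ k : Fin (n + 1),
        (d k * Complex.exp (Complex.I * ((lam k : ℂ) - (lam 0 : ℂ)) * (t : ℂ)) +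
         (starRingEnd ℂ) (d k) *
           Complex.exp (-Complex.I * ((lam k : ℂ) - (lam 0 : ℂ)) * (t : ℂ)))) ∧
      (∀ t : ℝ, (w t).im = 0) ∧
      ∃ y : ℝ → EuclideanSpace ℂ (Fin (n + 1)),
        y 0 = y₀ ∧
        (∀ t ∈ Set.Icc (0:ℝ) 1,
          y t = y 0 - Complex.I •
            ∫ s in (0:ℝ)..t,
              (Λ (y s) + (w s * Complex.exp (-Complex.I * (lam 0 : ℂ) * (s : ℂ))) • B (e 0))) ∧
        y 1 = y₁' :=
  stmt_15_general Λ B hB e he lam hlam hev hB1k y₀ y₁' hy₀ hy₁'
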